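/- arXiv:1810.13084 — 3 statements merged into one kernel-verified Lean document; each statement's English description precedes it below -/
import Mathlib

section
/- The randomized Kaczmarz method applied to a consistent linear system Ax = b, where at each step row i is sampled with probability p_i = ||A_{i:}||^2 / ||A||_F^2 and the update x^{k+1} = x^k - (A_{i:}x^k - b_i)/||A_{i:}||^2 · A_{i:}^T is performed, satisfies E[||x^k - x*||^2] ≤ ρ^k ||x^0 - x*||^2, where ρ = 1 - λ_min^+(A^T A / ||A||_F^2) and x* is the projection of x^0 onto the solution set. -/
/-!
Put `e = x - x*`. As `A x* = b`, the Kaczmarz step for row `i` is the orthogonal projection onto a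
hyperplane through `x*`, so it replaces `‖e‖²` by `‖e‖² - (Aᵢ·e)² / ‖Aᵢ‖²`; averaging over
`pᵢ = ‖Aᵢ‖² / ‖A‖_F²` gives `‖e‖² - ‖A e‖² / ‖A‖_F²`. Minimality of `x*` makes `x⁰ - x*`
orthogonal to `ker A`, and every step moves along a row of `A`, so all iterates keep `e ⊥ ker A`.
On `(ker A)^⊥ = (ker AᵀA)^⊥` the eigenbasis expansion of `AᵀA / ‖A‖_F²` only involves nonzero
eigenvalues, hence `‖A e‖² / ‖A‖_F² ≥ λ_min⁺ ‖e‖²`: one step contracts the expected squared error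
by `ρ`, and the recursion for `E` iterates this `k` times.
-/

open Matrix Finset

def IsEigenvalue {n : ℕ} (M : Matrix (Fin n) (Fin n) ℝ) (μ : ℝ) : Prop :=
  ∃ v : Fin n → ℝ, v ≠ 0 ∧ M.mulVec v = μ • v

lemma dotProduct_self_eq_sum_sq {ι : Type*} [Fintype ι] (v : ι → ℝ) :
    v ⬝ᵥ v = ∑ j, v j ^ 2 := by
  simp only [dotProduct, sq]

lemma dotProduct_self_nonneg {R ι : Type*} [Fintype ι] [Ring R] [LinearOrder R]
    [IsStrictOrderedRing R] (v : ι → R) : 0 ≤ v ⬝ᵥ v :=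
  sum_nonneg fun i _ => mul_self_nonneg (v i)

lemma sum_sub_sq_eq_dotProduct {ι : Type*} [Fintype ι] (x y : ι → ℝ) :
    ∑ j, (x j - y j) ^ 2 = (x - y) ⬝ᵥ (x - y) := by
  simp only [dotProduct_self_eq_sum_sq, Pi.sub_apply]

section Kaczmarz

variable {ι κ : Type*} [Fintype ι] [Fintype κ]

/-- For `a = 0` the junk value `_ / 0 = 0` makes this the identity, which keeps the lemmas below
true for zero rows. -/
noncomputable def kaczmarzStep (a : ι → ℝ) (β : ℝ) (x : ι → ℝ) : ι → ℝ :=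
  x - ((a ⬝ᵥ x - β) / (a ⬝ᵥ a)) • a

lemma kaczmarzStep_sub {a z : ι → ℝ} {β : ℝ} (hz : a ⬝ᵥ z = β) (x : ι → ℝ) :
    kaczmarzStep a β x - z = (x - z) - ((a ⬝ᵥ (x - z)) / (a ⬝ᵥ a)) • a := by
  rw [kaczmarzStep, dotProduct_sub, hz]
  abel

lemma kaczmarzStep_sub_dotProduct_of_dotProduct_eq_zero {a z w : ι → ℝ} {β : ℝ}
    (hz : a ⬝ᵥ z = β) (x : ι → ℝ) (hw : a ⬝ᵥ w = 0) :
    (kaczmarzStep a β x - z) ⬝ᵥ w = (x - z) ⬝ᵥ w := by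
  rw [kaczmarzStep_sub hz, sub_dotProduct, smul_dotProduct, hw, smul_zero, sub_zero]

lemma kaczmarzStep_sub_dotProduct_self {a z : ι → ℝ} {β : ℝ} (hz : a ⬝ᵥ z = β)
    (x : ι → ℝ) :
    (kaczmarzStep a β x - z) ⬝ᵥ (kaczmarzStep a β x - z)
      = (x - z) ⬝ᵥ (x - z) - (a ⬝ᵥ (x - z)) ^ 2 / (a ⬝ᵥ a) := by
  rw [kaczmarzStep_sub hz]
  rcases eq_or_ne a 0 with rfl | ha
  · simp
  have haa : a ⬝ᵥ a ≠ 0 := dotProduct_self_eq_zero.not.mpr ha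
  simp only [sub_dotProduct, dotProduct_sub, smul_dotProduct, dotProduct_smul, smul_eq_mul,
    dotProduct_comm (x - z) a]
  field_simp
  ring

lemma sum_mul_kaczmarzStep_sub_dotProduct_self {A : Matrix κ ι ℝ} {b : κ → ℝ}
    {z : ι → ℝ} (hz : A *ᵥ z = b) (hS : ∑ i, A i ⬝ᵥ A i ≠ 0) (x : ι → ℝ) :
    ∑ i, A i ⬝ᵥ A i / (∑ i', A i' ⬝ᵥ A i') *
        ((kaczmarzStep (A i) (b i) x - z) ⬝ᵥ (kaczmarzStep (A i) (b i) x - z))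
      = (x - z) ⬝ᵥ (x - z) - (A *ᵥ (x - z)) ⬝ᵥ (A *ᵥ (x - z)) / ∑ i, A i ⬝ᵥ A i := by
  set S := ∑ i, A i ⬝ᵥ A i
  have hterm : ∀ i, A i ⬝ᵥ A i / S *
      ((kaczmarzStep (A i) (b i) x - z) ⬝ᵥ (kaczmarzStep (A i) (b i) x - z))
        = A i ⬝ᵥ A i / S * ((x - z) ⬝ᵥ (x - z)) - (A i ⬝ᵥ (x - z)) ^ 2 / S := by
    intro i
    have hrow : A i ⬝ᵥ A i * ((A i ⬝ᵥ (x - z)) ^ 2 / (A i ⬝ᵥ A i)) = (A i ⬝ᵥ (x - z)) ^ 2 :=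
      mul_div_cancel_of_imp' fun h => by simp [dotProduct_self_eq_zero.mp h]
    rw [kaczmarzStep_sub_dotProduct_self (congrFun hz i)]
    linear_combination (-1 / S) * hrow
  simp only [hterm, sum_sub_distrib, ← sum_mul, ← sum_div]
  rw [show ∑ i, A i ⬝ᵥ A i = S from rfl, div_self hS, one_mul,
    dotProduct_self_eq_sum_sq (A *ᵥ (x - z))]
  rfl

end Kaczmarz

section Spectral

variable {ι : Type*} [Fintype ι]

lemma dotProduct_transpose_mul_self_mulVec {κ : Type*} [Fintype κ] (A : Matrix κ ι ℝ)
    (z w : ι → ℝ) : z ⬝ᵥ ((Aᵀ * A) *ᵥ w) = (A *ᵥ z) ⬝ᵥ (A *ᵥ w) := by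
  rw [← mulVec_mulVec, dotProduct_mulVec, vecMul_transpose]

lemma mulVec_dotProduct_self_le {κ : Type*} [Fintype κ] (A : Matrix κ ι ℝ) (v : ι → ℝ) :
    (A *ᵥ v) ⬝ᵥ (A *ᵥ v) ≤ (∑ i, A i ⬝ᵥ A i) * (v ⬝ᵥ v) := by
  rw [dotProduct_self_eq_sum_sq (A *ᵥ v), sum_mul]
  refine sum_le_sum fun i _ => ?_
  calc (A *ᵥ v) i ^ 2 = (∑ j, A i j * v j) ^ 2 := rfl
    _ ≤ (∑ j, A i j ^ 2) * ∑ j, v j ^ 2 := sum_mul_sq_le_sq_mul_sq univ (A i) v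
    _ = A i ⬝ᵥ A i * (v ⬝ᵥ v) := by rw [dotProduct_self_eq_sum_sq, dotProduct_self_eq_sum_sq]

lemma OrthonormalBasis.sum_dotProduct_mul_dotProduct {ι' : Type*} [Fintype ι']
    (u : OrthonormalBasis ι' ℝ (EuclideanSpace ℝ ι)) (x y : ι → ℝ) :
    ∑ i, (u i ⬝ᵥ x) * (u i ⬝ᵥ y) = x ⬝ᵥ y := by
  have h := u.sum_inner_mul_inner (WithLp.toLp 2 x) (WithLp.toLp 2 y)
  simp only [EuclideanSpace.inner_eq_star_dotProduct, star_trivial] at h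
  rw [dotProduct_comm x y, ← h]
  exact sum_congr rfl fun i _ => by rw [dotProduct_comm y]

lemma Matrix.IsHermitian.dotProduct_mulVec_eq_sum {M : Matrix ι ι ℝ} [DecidableEq ι]
    (hM : M.IsHermitian) (z : ι → ℝ) :
    z ⬝ᵥ (M *ᵥ z) = ∑ i, hM.eigenvalues i * (hM.eigenvectorBasis i ⬝ᵥ z) ^ 2 := by
  rw [← hM.eigenvectorBasis.sum_dotProduct_mul_dotProduct]
  refine sum_congr rfl fun i _ => ?_
  have hMT : Mᵀ = M := hM
  rw [dotProduct_mulVec, ← mulVec_transpose, hMT, hM.mulVec_eigenvectorBasis i,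
    smul_dotProduct, smul_eq_mul]
  ring

end Spectral

lemma Matrix.IsHermitian.isEigenvalue_eigenvalues {n : ℕ} {M : Matrix (Fin n) (Fin n) ℝ}
    (hM : M.IsHermitian) (i : Fin n) : IsEigenvalue M (hM.eigenvalues i) :=
  ⟨hM.eigenvectorBasis i, (WithLp.ofLp_eq_zero 2).ne.2 (hM.eigenvectorBasis.orthonormal.ne_zero i),
    hM.mulVec_eigenvectorBasis i⟩

lemma Matrix.IsHermitian.mul_dotProduct_self_le {n : ℕ} {M : Matrix (Fin n) (Fin n) ℝ}
    (hM : M.IsHermitian) {c : ℝ} (hc : ∀ μ, μ ≠ 0 → IsEigenvalue M μ → c ≤ μ)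
    {z : Fin n → ℝ} (hz : ∀ w, M *ᵥ w = 0 → z ⬝ᵥ w = 0) :
    c * (z ⬝ᵥ z) ≤ z ⬝ᵥ (M *ᵥ z) := by
  rw [← hM.eigenvectorBasis.sum_dotProduct_mul_dotProduct, hM.dotProduct_mulVec_eq_sum,
    mul_sum]
  refine sum_le_sum fun i _ => ?_
  rcases eq_or_ne (hM.eigenvalues i) 0 with h0 | h0
  · have hu : M *ᵥ hM.eigenvectorBasis i = 0 := by
      rw [hM.mulVec_eigenvectorBasis i, h0, zero_smul]
    simp [dotProduct_comm _ z, hz _ hu, h0]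
  · rw [← sq]
    exact mul_le_mul_of_nonneg_right (hc _ h0 (hM.isEigenvalue_eigenvalues i)) (sq_nonneg _)

lemma eq_zero_of_isEigenvalue_zero {n : ℕ} {μ : ℝ}
    (h : IsEigenvalue (0 : Matrix (Fin n) (Fin n) ℝ) μ) : μ = 0 := by
  obtain ⟨v, hv0, hv⟩ := h
  rw [zero_mulVec, eq_comm, smul_eq_zero] at hv
  exact hv.resolve_right hv0

section Transition

variable {X ι : Type*} [Fintype ι]

def transitionOp (p : ι → ℝ) (f : ι → X → X) (g : X → ℝ) (x : X) : ℝ :=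
  ∑ i, p i * g (f i x)

lemma iterate_transitionOp_le_pow_mul {p : ι → ℝ} (hp : ∀ i, 0 ≤ p i) {f : ι → X → X}
    {P : X → Prop} (hP : ∀ i x, P x → P (f i x)) {V : X → ℝ} {ρ : ℝ} (hρ : 0 ≤ ρ)
    (hV : ∀ x, P x → transitionOp p f V x ≤ ρ * V x) (k : ℕ) {x : X} (hx : P x) :
    (transitionOp p f)^[k] V x ≤ ρ ^ k * V x := by
  induction k generalizing x with
  | zero => simp
  | succ k ih =>
    rw [Function.iterate_succ_apply']
    calc transitionOp p f ((transitionOp p f)^[k] V) x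
        ≤ transitionOp p f (fun y => ρ ^ k * V y) x :=
          sum_le_sum fun i _ => mul_le_mul_of_nonneg_left (ih (hP i x hx)) (hp i)
      _ = ρ ^ k * transitionOp p f V x := by
          simp only [transitionOp, mul_sum]
          exact sum_congr rfl fun i _ => by ring
      _ ≤ ρ ^ k * (ρ * V x) := mul_le_mul_of_nonneg_left (hV x hx) (pow_nonneg hρ k)
      _ = ρ ^ (k + 1) * V x := by ring

end Transition

lemma eq_apply_iterate_of_forall_succ {α β : Type*} {E : ℕ → α → β} {T : α → α}
    {e : α → β} (h0 : ∀ f, E 0 f = e f) (hS : ∀ k f, E (k + 1) f = E k (T f)) (k : ℕ)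
    (f : α) : E k f = e (T^[k] f) := by
  induction k generalizing f with
  | zero => exact h0 f
  | succ k ih => rw [hS, ih, Function.iterate_succ_apply]

section Frobenius

variable {κ : Type*} [Fintype κ] {n : ℕ} {A : Matrix κ (Fin n) ℝ}

lemma le_one_of_isEigenvalue_smul_transpose_mul_self {μ : ℝ}
    (h : IsEigenvalue ((1 / ∑ i, A i ⬝ᵥ A i) • (Aᵀ * A)) μ) : μ ≤ 1 := by
  obtain ⟨v, hv0, hv⟩ := h
  have hvv : 0 < v ⬝ᵥ v := lt_of_le_of_ne (dotProduct_self_nonneg v)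
    (Ne.symm (dotProduct_self_eq_zero.not.mpr hv0))
  have hquad : μ * (v ⬝ᵥ v) = (A *ᵥ v) ⬝ᵥ (A *ᵥ v) / ∑ i, A i ⬝ᵥ A i := by
    have h := congrArg (v ⬝ᵥ ·) hv
    simp only [smul_mulVec, dotProduct_smul, smul_eq_mul,
      dotProduct_transpose_mul_self_mulVec] at h
    rw [← h, one_div_mul_eq_div]
  have hle : μ * (v ⬝ᵥ v) ≤ v ⬝ᵥ v := by
    rw [hquad]
    exact div_le_of_le_mul₀ (sum_nonneg fun i _ => dotProduct_self_nonneg (A i))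
      (dotProduct_self_nonneg v) (by rw [mul_comm]; exact mulVec_dotProduct_self_le A v)
  exact (mul_le_iff_le_one_left hvv).mp hle

lemma mul_dotProduct_self_le_mul_mulVec_dotProduct_mulVec {t c : ℝ} (ht : t ≠ 0)
    (hc : ∀ μ, μ ≠ 0 → IsEigenvalue (t • (Aᵀ * A)) μ → c ≤ μ) {z : Fin n → ℝ}
    (hz : ∀ w, A *ᵥ w = 0 → z ⬝ᵥ w = 0) :
    c * (z ⬝ᵥ z) ≤ t * ((A *ᵥ z) ⬝ᵥ (A *ᵥ z)) := by
  have hM : (t • (Aᵀ * A)).IsHermitian :=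
    (isHermitian_conjTranspose_mul_self A).smul (IsSelfAdjoint.all t)
  have hker : ∀ w, (t • (Aᵀ * A)) *ᵥ w = 0 → z ⬝ᵥ w = 0 := by
    intro w hw
    rw [smul_mulVec, smul_eq_zero, or_iff_right ht] at hw
    refine hz w (dotProduct_self_eq_zero.mp ?_)
    rw [← dotProduct_transpose_mul_self_mulVec, hw, dotProduct_zero]
  have h := hM.mul_dotProduct_self_le hc hker
  rwa [smul_mulVec, dotProduct_smul, smul_eq_mul, dotProduct_transpose_mul_self_mulVec] at h

lemma transitionOp_kaczmarzStep_le {b : κ → ℝ} {z : Fin n → ℝ} (hz : A *ᵥ z = b)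
    (hS : ∑ i, A i ⬝ᵥ A i ≠ 0) {lam : ℝ}
    (hlam : ∀ μ, μ ≠ 0 → IsEigenvalue ((1 / ∑ i, A i ⬝ᵥ A i) • (Aᵀ * A)) μ → lam ≤ μ)
    {x : Fin n → ℝ} (hx : ∀ w, A *ᵥ w = 0 → (x - z) ⬝ᵥ w = 0) :
    transitionOp (fun i => A i ⬝ᵥ A i / ∑ i', A i' ⬝ᵥ A i')
        (fun i => kaczmarzStep (A i) (b i)) (fun y => (y - z) ⬝ᵥ (y - z)) x
      ≤ (1 - lam) * ((x - z) ⬝ᵥ (x - z)) := by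
  have hspec := mul_dotProduct_self_le_mul_mulVec_dotProduct_mulVec (one_div_ne_zero hS) hlam hx
  rw [one_div_mul_eq_div] at hspec
  rw [transitionOp, sum_mul_kaczmarzStep_sub_dotProduct_self hz hS]
  linarith

end Frobenius

lemma eq_zero_of_forall_two_mul_mul_add_sq_mul_nonneg {c W : ℝ} (hW : 0 ≤ W)
    (h : ∀ t : ℝ, 0 ≤ 2 * t * c + t ^ 2 * W) : c = 0 := by
  have key := h (-c / (W + 1))
  field_simp at key
  nlinarith [sq_nonneg c]

lemma sub_dotProduct_eq_zero_of_forall_le_of_mulVec_eq_zero {ι κ : Type*} [Fintype ι]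
    [Fintype κ] {A : Matrix κ ι ℝ} {b : κ → ℝ} {x0 z : ι → ℝ} (hz : A *ᵥ z = b)
    (hmin : ∀ y, A *ᵥ y = b → (z - x0) ⬝ᵥ (z - x0) ≤ (y - x0) ⬝ᵥ (y - x0))
    {w : ι → ℝ} (hw : A *ᵥ w = 0) : (x0 - z) ⬝ᵥ w = 0 := by
  have hquad : ∀ t : ℝ, 0 ≤ 2 * t * (w ⬝ᵥ (z - x0)) + t ^ 2 * (w ⬝ᵥ w) := by
    intro t
    have h := hmin (z + t • w) (by rw [mulVec_add, mulVec_smul, hw, smul_zero, add_zero, hz])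
    rw [show z + t • w - x0 = (z - x0) + t • w by abel] at h
    simp only [add_dotProduct, dotProduct_add, smul_dotProduct, dotProduct_smul, smul_eq_mul,
      dotProduct_comm (z - x0) w] at h
    linarith
  rw [← neg_sub, neg_dotProduct, dotProduct_comm,
    eq_zero_of_forall_two_mul_mul_add_sq_mul_nonneg (dotProduct_self_nonneg w) hquad, neg_zero]

theorem rk_convergence_general {m n : ℕ} (A : Matrix (Fin m) (Fin n) ℝ) (b : Fin m → ℝ)
    (x0 xstar : Fin n → ℝ)
    (hxstar : A.mulVec xstar = b ∧
      ∀ y, A.mulVec y = b → ∑ j, (xstar j - x0 j) ^ 2 ≤ ∑ j, (y j - x0 j) ^ 2)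
    (p : Fin m → ℝ)
    (hp : ∀ i, p i = (∑ j, (A i j) ^ 2) / (∑ i', ∑ j, (A i' j) ^ 2))
    (step : Fin m → (Fin n → ℝ) → (Fin n → ℝ))
    (hstep : ∀ i x, step i x = x - ((A i ⬝ᵥ x - b i) / (∑ j, (A i j) ^ 2)) • (A i))
    (E : ℕ → ((Fin n → ℝ) → ℝ) → ℝ)
    (hE0 : ∀ f, E 0 f = f x0)
    (hES : ∀ k f, E (k + 1) f = E k (fun x => ∑ i, p i * f (step i x)))
    (lam : ℝ)
    (hlam : IsLeast {μ : ℝ | μ ≠ 0 ∧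
      IsEigenvalue ((1 / ∑ i', ∑ j, (A i' j) ^ 2) • (Aᵀ * A)) μ} lam)
    (ρ : ℝ) (hρ : ρ = 1 - lam) :
    ∀ k, E k (fun x => ∑ j, (x j - xstar j) ^ 2) ≤ ρ ^ k * ∑ j, (x0 j - xstar j) ^ 2 := by
  simp only [← dotProduct_self_eq_sum_sq] at hp hstep hlam
  simp only [sum_sub_sq_eq_dotProduct] at hxstar ⊢
  obtain ⟨hAxstar, hmin⟩ := hxstar
  obtain ⟨⟨hlam0, hlamEig⟩, hlamLeast⟩ := hlam
  have hS : ∑ i, A i ⬝ᵥ A i ≠ 0 := fun hS =>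
    hlam0 (eq_zero_of_isEigenvalue_zero (by simpa [hS] using hlamEig))
  obtain rfl : p = fun i => A i ⬝ᵥ A i / ∑ i', A i' ⬝ᵥ A i' := funext hp
  obtain rfl : step = fun i => kaczmarzStep (A i) (b i) :=
    funext fun i => funext fun x => hstep i x
  intro k
  rw [eq_apply_iterate_of_forall_succ (e := fun f => f x0) hE0 hES]
  refine iterate_transitionOp_le_pow_mul
    (fun i => div_nonneg (dotProduct_self_nonneg _)
      (sum_nonneg fun _ _ => dotProduct_self_nonneg _))
    (P := fun x => ∀ w, A *ᵥ w = 0 → (x - xstar) ⬝ᵥ w = 0) ?_ ?_ ?_ k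
    (fun w hw => sub_dotProduct_eq_zero_of_forall_le_of_mulVec_eq_zero hAxstar hmin hw)
  · intro i x hx w hw
    rw [kaczmarzStep_sub_dotProduct_of_dotProduct_eq_zero (congrFun hAxstar i) x (congrFun hw i)]
    exact hx w hw
  · rw [hρ, sub_nonneg]
    exact le_one_of_isEigenvalue_smul_transpose_mul_self hlamEig
  · intro x hx
    rw [hρ]
    exact transitionOp_kaczmarzStep_le hAxstar hS (fun μ h0 hμ => hlamLeast ⟨h0, hμ⟩) hx

/-- Convergence of the randomized Kaczmarz method: with rows sampled with
probabilities `pᵢ = ‖Aᵢ:‖² / ‖A‖_F²`, the expected squared distance to the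
projection `x*` of `x⁰` onto the solution set decays linearly with rate
`ρ = 1 - λ_min⁺(AᵀA / ‖A‖_F²)`. The expectation operator `E k` over the i.i.d.
row choices of the first `k` iterations is characterized recursively. -/
theorem rk_convergence {m n : ℕ} (A : Matrix (Fin m) (Fin n) ℝ) (b : Fin m → ℝ)
    (hrows : ∀ i, A i ≠ 0)
    (hconsistent : ∃ x, A.mulVec x = b)
    (x0 xstar : Fin n → ℝ)
    (hxstar : A.mulVec xstar = b ∧
      ∀ y, A.mulVec y = b → ∑ j, (xstar j - x0 j) ^ 2 ≤ ∑ j, (y j - x0 j) ^ 2)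
    (p : Fin m → ℝ)
    (hp : ∀ i, p i = (∑ j, (A i j) ^ 2) / (∑ i', ∑ j, (A i' j) ^ 2))
    (step : Fin m → (Fin n → ℝ) → (Fin n → ℝ))
    (hstep : ∀ i x, step i x = x - ((A i ⬝ᵥ x - b i) / (∑ j, (A i j) ^ 2)) • (A i))
    (E : ℕ → ((Fin n → ℝ) → ℝ) → ℝ)
    (hE0 : ∀ f, E 0 f = f x0)
    (hES : ∀ k f, E (k + 1) f = E k (fun x => ∑ i, p i * f (step i x)))
    (lam : ℝ)
    (hlam : IsLeast {μ : ℝ | μ ≠ 0 ∧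
      IsEigenvalue ((1 / ∑ i', ∑ j, (A i' j) ^ 2) • (Aᵀ * A)) μ} lam)
    (ρ : ℝ) (hρ : ρ = 1 - lam) :
    ∀ k, E k (fun x => ∑ j, (x j - xstar j) ^ 2) ≤ ρ ^ k * ∑ j, (x0 j - xstar j) ^ 2 :=
  rk_convergence_general A b x0 xstar hxstar p hp step hstep E hE0 hES lam hlam ρ hρ
end

section
/- For the randomized pairwise gossip algorithm on a connected graph G with m edges, where each iteration an edge (i,j) is picked uniformly at random and x_i, x_j are replaced by their average, one has E[||x^{k+1} - c̄·1||^2 | x^k] ≤ (1 - λ_min^+(L)/(2m)) ||x^k - c̄·1||^2, where L is the graph Laplacian. -/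
/-!
Averaging the endpoints of an edge `{i, j}` lowers `∑ ℓ, (x ℓ - c̄)²` by exactly `(x i - x j)² / 2`.
Averaging over the `2m` ordered adjacent pairs, the expected decrease is therefore `yᵀ L y / (2m)`
with `y = x - c̄ 𝟙`, since `∑ over i ~ j of (y i - y j)² = 2 yᵀ L y`. As `y` sums to zero and `ker L`
consists of the constant vectors (`G` is connected), `y` has no component along the eigenvalue `0`
of `L`; expanding `y` in an orthonormal eigenbasis of `L` then gives `yᵀ L y ≥ λ⁺_min ‖y‖²`.
-/

open Matrix Finset

namespace OrthonormalBasis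

variable {ι : Type*} [Fintype ι]

theorem sum_dotProduct_mul_dotProduct_s10 (b : OrthonormalBasis ι ℝ (EuclideanSpace ℝ ι))
    (u v : ι → ℝ) : ∑ i, (u ⬝ᵥ b i) * (b i ⬝ᵥ v) = u ⬝ᵥ v := by
  simpa [EuclideanSpace.inner_toLp_toLp, EuclideanSpace.inner_eq_star_dotProduct, dotProduct_comm]
    using b.sum_inner_mul_inner (WithLp.toLp 2 u) (WithLp.toLp 2 v)

end OrthonormalBasis

namespace Matrix

variable {ι : Type*} [Fintype ι] [DecidableEq ι]

theorem IsHermitian.mul_dotProduct_self_le_dotProduct_mulVec {A : Matrix ι ι ℝ}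
    (hA : A.IsHermitian) {lam : ℝ}
    (hlam : lam ∈ lowerBounds {μ : ℝ | μ ≠ 0 ∧ ∃ v : ι → ℝ, v ≠ 0 ∧ A *ᵥ v = μ • v})
    {y : ι → ℝ} (hy : ∀ v, A *ᵥ v = 0 → y ⬝ᵥ v = 0) :
    lam * (y ⬝ᵥ y) ≤ y ⬝ᵥ A *ᵥ y := by
  set b := hA.eigenvectorBasis
  have hAb := hA.mulVec_eigenvectorBasis
  have hcoeff : ∀ i, b i ⬝ᵥ A *ᵥ y = hA.eigenvalues i * (b i ⬝ᵥ y) := by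
    intro i
    rw [dotProduct_mulVec, ← mulVec_transpose, ← conjTranspose_eq_transpose_of_trivial, hA,
      hAb, smul_dotProduct, smul_eq_mul]
  rw [← b.sum_dotProduct_mul_dotProduct_s10, ← b.sum_dotProduct_mul_dotProduct_s10, mul_sum]
  refine sum_le_sum fun i _ => ?_
  rw [hcoeff, dotProduct_comm (b i) y]
  rcases eq_or_ne (hA.eigenvalues i) 0 with h0 | hne
  · have hker : y ⬝ᵥ b i = 0 := hy _ (by rw [hAb, h0, zero_smul])
    simp [hker]
  · have hle : lam ≤ hA.eigenvalues i :=
      hlam ⟨hne, b i, fun h => b.orthonormal.ne_zero i (by ext ℓ; exact congrFun h ℓ), hAb i⟩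
    nlinarith [mul_self_nonneg (y ⬝ᵥ b i)]

end Matrix

noncomputable def pairAverage {ι : Type*} [DecidableEq ι] (i j : ι) (x : ι → ℝ) (ℓ : ι) : ℝ :=
  if ℓ = i ∨ ℓ = j then (x i + x j) / 2 else x ℓ

theorem sum_sq_sub_pairAverage {ι : Type*} [Fintype ι] [DecidableEq ι] {i j : ι} (hij : i ≠ j)
    (x : ι → ℝ) (c : ℝ) :
    ∑ ℓ, (pairAverage i j x ℓ - c) ^ 2 = ∑ ℓ, (x ℓ - c) ^ 2 - (x i - x j) ^ 2 / 2 := by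
  have hsupp : ∀ ℓ ∉ ({i, j} : Finset ι), (pairAverage i j x ℓ - c) ^ 2 - (x ℓ - c) ^ 2 = 0 := by
    intro ℓ hℓ
    simp only [mem_insert, mem_singleton] at hℓ
    simp [pairAverage, hℓ]
  have hdiff : ∑ ℓ, ((pairAverage i j x ℓ - c) ^ 2 - (x ℓ - c) ^ 2) = -((x i - x j) ^ 2 / 2) := by
    rw [← sum_subset (subset_univ _) fun ℓ _ => hsupp ℓ, sum_pair hij]
    simp only [pairAverage, true_or, or_true, if_true]
    ring
  rw [sum_sub_distrib] at hdiff
  linarith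

namespace SimpleGraph

variable {V : Type*} [Fintype V] [DecidableEq V] (G : SimpleGraph V) [DecidableRel G.Adj]

theorem dotProduct_eq_zero_of_lapMatrix_mulVec_eq_zero (hG : G.Connected) {x v : V → ℝ}
    (hx : ∑ i, x i = 0) (hv : G.lapMatrix ℝ *ᵥ v = 0) : x ⬝ᵥ v = 0 := by
  obtain ⟨i₀⟩ := hG.nonempty
  have hconst : ∀ i, v i = v i₀ :=
    fun i => (G.lapMatrix_mulVec_eq_zero_iff_forall_reachable.mp hv) i i₀ (hG i i₀)
  simp only [dotProduct, hconst, ← sum_mul, hx, zero_mul]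

theorem sum_adj_sub_sq_eq_two_mul_dotProduct_lapMatrix (x : V → ℝ) :
    ∑ q ∈ univ.filter (fun q : V × V => G.Adj q.1 q.2), (x q.1 - x q.2) ^ 2 =
      2 * (x ⬝ᵥ G.lapMatrix ℝ *ᵥ x) := by
  have h := G.lapMatrix_toLinearMap₂' ℝ x
  rw [toLinearMap₂'_apply'] at h
  rw [h, sum_filter, Fintype.sum_prod_type]
  ring

theorem sum_adj_sum_sq_sub_pairAverage (x : V → ℝ) (c : ℝ) :
    ∑ q ∈ univ.filter (fun q : V × V => G.Adj q.1 q.2), ∑ ℓ, (pairAverage q.1 q.2 x ℓ - c) ^ 2 =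
      2 * #G.edgeFinset * ∑ ℓ, (x ℓ - c) ^ 2 -
        (fun ℓ => x ℓ - c) ⬝ᵥ G.lapMatrix ℝ *ᵥ (fun ℓ => x ℓ - c) := by
  rw [sum_congr rfl fun q hq => sum_sq_sub_pairAverage (G.ne_of_adj (mem_filter.mp hq).2) x c,
    sum_sub_distrib, sum_const, ← two_mul_card_edgeFinset, ← sum_div]
  have hquad := G.sum_adj_sub_sq_eq_two_mul_dotProduct_lapMatrix fun ℓ => x ℓ - c
  simp only [sub_sub_sub_cancel_right] at hquad
  rw [hquad, nsmul_eq_mul]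
  push_cast
  ring

end SimpleGraph

/-- One-step expected contraction of randomized pairwise gossip on a connected
graph `G` with `m` edges: picking an edge uniformly at random (equivalently an
ordered adjacent pair, each with probability `1/(2m)`) and averaging its
endpoints, the expected squared distance to consensus contracts by the factor
`1 - λ_min⁺(L)/(2m)` where `L` is the graph Laplacian. -/
theorem gossip_expected_contraction {n : ℕ} (G : SimpleGraph (Fin n))
    [DecidableRel G.Adj] (hG : G.Connected)
    (m : ℕ) (hm : m = G.edgeFinset.card)
    (update : Fin n → Fin n → (Fin n → ℝ) → (Fin n → ℝ))
    (hupdate : ∀ i j x ℓ, update i j x ℓ =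
      if ℓ = i ∨ ℓ = j then (x i + x j) / 2 else x ℓ)
    (lam : ℝ)
    (hlam : IsLeast {μ : ℝ | μ ≠ 0 ∧
      ∃ v : Fin n → ℝ, v ≠ 0 ∧ (G.lapMatrix ℝ).mulVec v = μ • v} lam)
    (x : Fin n → ℝ) (cbar : ℝ) (hcbar : cbar = (∑ ℓ, x ℓ) / n) :
    ∑ q ∈ Finset.univ.filter (fun q : Fin n × Fin n => G.Adj q.1 q.2),
        (1 / (2 * (m : ℝ))) * ∑ ℓ, (update q.1 q.2 x ℓ - cbar) ^ 2
      ≤ (1 - lam / (2 * m)) * ∑ ℓ, (x ℓ - cbar) ^ 2 := by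
  set y : Fin n → ℝ := fun ℓ => x ℓ - cbar
  have hy : ∑ ℓ, y ℓ = 0 := by
    have : (n : ℝ) ≠ 0 := by exact_mod_cast hG.nonempty.some.pos.ne'
    simp [y, sum_sub_distrib, hcbar, mul_div_cancel₀ _ this]
  have hspectral : lam * ∑ ℓ, y ℓ ^ 2 ≤ y ⬝ᵥ G.lapMatrix ℝ *ᵥ y := by
    simpa only [dotProduct, sq] using
      (G.isHermitian_lapMatrix ℝ).mul_dotProduct_self_le_dotProduct_mulVec hlam.2
        fun v hv => G.dotProduct_eq_zero_of_lapMatrix_mulVec_eq_zero hG hy hv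
  have hupdate' : ∀ i j, update i j x = pairAverage i j x := fun i j => funext (hupdate i j x)
  simp_rw [hupdate', ← mul_sum, G.sum_adj_sum_sq_sub_pairAverage, ← hm]
  rcases eq_or_ne m 0 with rfl | hm0
  -- without edges, `1 / (2 * m)` and `lam / (2 * m)` are both the junk value `0`
  · simp only [Nat.cast_zero, mul_zero, div_zero, zero_mul, sub_zero, one_mul]
    positivity
  · field_simp
    linarith
end

section
/- With σ_1 = 1 + √λ/(2m) and σ_2 = 1 - √λ/(2m) for 0 < λ ≤ m^2, the quantity 4λ/(σ_1^{k+1} - σ_2^{k+1})^2 converges to 0 as k → ∞, and asymptotically decreases by a factor σ_1^{-2} per iteration; moreover σ_1^{-2} ≤ 1 - √λ/m + 3λ/(4m^2). -/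
open Filter Topology

/-!
Writing `σ₁ = 1 + s`, `σ₂ = 1 - s` with `s = √λ/(2m) > 0`, we have `|σ₂| < σ₁` and
`σ₁^n - σ₂^n = σ₁^n (1 - (σ₂/σ₁)^n)` with `|σ₂/σ₁| < 1`. Hence the denominators grow like `σ₁^n`,
and consecutive ones have ratio tending to `σ₁`. The bound on `σ₁⁻²` is the polynomial identity
`(1 + s)² (1 - 2s + 3s²) = 1 + 4s³ + 3s⁴`.
-/

lemma pow_sub_pow_eq_pow_mul_one_sub {K : Type*} [Field K] {a : K} (ha : a ≠ 0) (b : K) (n : ℕ) :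
    a ^ n - b ^ n = a ^ n * (1 - (b / a) ^ n) := by
  rw [div_pow, mul_sub, mul_div_cancel₀ _ (pow_ne_zero n ha), mul_one]

section PowSubPow

variable {a b : ℝ}

lemma tendsto_div_pow_atTop_nhds_zero (hab : |b| < a) :
    Tendsto (fun n : ℕ => (b / a) ^ n) atTop (𝓝 0) := by
  have ha : 0 < a := (abs_nonneg b).trans_lt hab
  refine tendsto_pow_atTop_nhds_zero_of_abs_lt_one ?_
  rwa [abs_div, abs_of_pos ha, div_lt_one ha]

lemma tendsto_pow_sub_pow_atTop (ha : 1 < a) (hab : |b| < a) :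
    Tendsto (fun n : ℕ => a ^ n - b ^ n) atTop atTop := by
  have hlim : Tendsto (fun n : ℕ => 1 - (b / a) ^ n) atTop (𝓝 1) := by
    simpa using (tendsto_div_pow_atTop_nhds_zero hab).const_sub 1
  have hprod := (tendsto_pow_atTop_atTop_of_one_lt ha).atTop_mul_pos one_pos hlim
  exact hprod.congr fun n => (pow_sub_pow_eq_pow_mul_one_sub (by positivity) b n).symm

lemma tendsto_pow_sub_pow_div_succ (hab : |b| < a) :
    Tendsto (fun n : ℕ => (a ^ n - b ^ n) / (a ^ (n + 1) - b ^ (n + 1))) atTop (𝓝 a⁻¹) := by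
  have ha : a ≠ 0 := ((abs_nonneg b).trans_lt hab).ne'
  have hr := tendsto_div_pow_atTop_nhds_zero hab
  have hlim : Tendsto (fun n : ℕ => a⁻¹ * ((1 - (b / a) ^ n) / (1 - (b / a) ^ (n + 1))))
      atTop (𝓝 (a⁻¹ * ((1 - 0) / (1 - 0)))) :=
    ((hr.const_sub 1).div ((hr.comp (tendsto_add_atTop_nat 1)).const_sub 1)
      (by norm_num)).const_mul a⁻¹
  rw [sub_zero, div_one, mul_one] at hlim
  refine hlim.congr fun n => ?_
  rw [pow_sub_pow_eq_pow_mul_one_sub ha b n, pow_sub_pow_eq_pow_mul_one_sub ha b (n + 1),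
    mul_div_mul_comm, pow_succ' a n, div_mul_cancel_right₀ (pow_ne_zero n ha)]

lemma tendsto_div_sq_pow_sub_pow_nhds_zero (c : ℝ) (ha : 1 < a) (hab : |b| < a) :
    Tendsto (fun k : ℕ => c / (a ^ (k + 1) - b ^ (k + 1)) ^ 2) atTop (𝓝 0) := by
  have hD := (tendsto_pow_sub_pow_atTop ha hab).comp (tendsto_add_atTop_nat 1)
  exact tendsto_const_nhds.div_atTop ((tendsto_pow_atTop two_ne_zero).comp hD)

lemma tendsto_div_sq_pow_sub_pow_ratio {c : ℝ} (hc : c ≠ 0) (hab : |b| < a) :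
    Tendsto (fun k : ℕ => (c / (a ^ (k + 2) - b ^ (k + 2)) ^ 2) /
        (c / (a ^ (k + 1) - b ^ (k + 1)) ^ 2)) atTop (𝓝 (a⁻¹ ^ 2)) := by
  refine (((tendsto_pow_sub_pow_div_succ hab).comp (tendsto_add_atTop_nat 1)).pow 2).congr
    fun k => ?_
  rw [div_div_div_cancel_left' _ _ hc, Function.comp_apply, div_pow]

end PowSubPow

lemma inv_one_add_sq_le {s : ℝ} (hs : 0 ≤ s) : (1 + s)⁻¹ ^ 2 ≤ 1 - 2 * s + 3 * s ^ 2 := by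
  have hprod : (1 - 2 * s + 3 * s ^ 2) * (1 + s) ^ 2 = 1 + 4 * s ^ 3 + 3 * s ^ 4 := by ring
  rw [inv_pow, inv_le_iff_one_le_mul₀ (by positivity), hprod]
  nlinarith [pow_nonneg hs 3, pow_nonneg hs 4]

theorem liu_wright_asymptotic_rate_general {m : ℕ} (hm : 0 < m)
    (lam : ℝ) (h1 : 0 < lam)
    (σ1 σ2 : ℝ)
    (hσ1 : σ1 = 1 + Real.sqrt lam / (2 * m))
    (hσ2 : σ2 = 1 - Real.sqrt lam / (2 * m)) :
    Tendsto (fun k : ℕ => 4 * lam / (σ1 ^ (k + 1) - σ2 ^ (k + 1)) ^ 2)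
      atTop (nhds 0) ∧
    Tendsto (fun k : ℕ => (4 * lam / (σ1 ^ (k + 2) - σ2 ^ (k + 2)) ^ 2) /
        (4 * lam / (σ1 ^ (k + 1) - σ2 ^ (k + 1)) ^ 2))
      atTop (nhds (σ1⁻¹ ^ 2)) ∧
    σ1⁻¹ ^ 2 ≤ 1 - Real.sqrt lam / m + 3 * lam / (4 * m ^ 2) := by
  set s := Real.sqrt lam / (2 * m) with hs
  have hs_pos : 0 < s := by positivity
  have hσ1_gt : 1 < σ1 := by linarith
  have hσ2_abs : |σ2| < σ1 := abs_lt.mpr ⟨by linarith, by linarith⟩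
  have hbound : 1 - Real.sqrt lam / m + 3 * lam / (4 * m ^ 2) = 1 - 2 * s + 3 * s ^ 2 := by
    rw [hs, div_pow, Real.sq_sqrt h1.le]
    field_simp
    ring
  refine ⟨tendsto_div_sq_pow_sub_pow_nhds_zero _ hσ1_gt hσ2_abs,
    tendsto_div_sq_pow_sub_pow_ratio (by positivity) hσ2_abs, ?_⟩
  rw [hbound, hσ1]
  exact inv_one_add_sq_le hs_pos.le

/-- With `σ₁ = 1 + √λ/(2m)` and `σ₂ = 1 - √λ/(2m)` for `0 < λ ≤ m²`, the
quantity `4λ/(σ₁^{k+1} - σ₂^{k+1})²` tends to `0`, asymptotically decreases by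
the factor `σ₁⁻²` per iteration, and `σ₁⁻² ≤ 1 - √λ/m + 3λ/(4m²)`. -/
theorem liu_wright_asymptotic_rate {m : ℕ} (hm : 0 < m)
    (lam : ℝ) (h1 : 0 < lam) (h2 : lam ≤ (m : ℝ) ^ 2)
    (σ1 σ2 : ℝ)
    (hσ1 : σ1 = 1 + Real.sqrt lam / (2 * m))
    (hσ2 : σ2 = 1 - Real.sqrt lam / (2 * m)) :
    Tendsto (fun k : ℕ => 4 * lam / (σ1 ^ (k + 1) - σ2 ^ (k + 1)) ^ 2)
      atTop (nhds 0) ∧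
    Tendsto (fun k : ℕ => (4 * lam / (σ1 ^ (k + 2) - σ2 ^ (k + 2)) ^ 2) /
        (4 * lam / (σ1 ^ (k + 1) - σ2 ^ (k + 1)) ^ 2))
      atTop (nhds (σ1⁻¹ ^ 2)) ∧
    σ1⁻¹ ^ 2 ≤ 1 - Real.sqrt lam / m + 3 * lam / (4 * m ^ 2) :=
  liu_wright_asymptotic_rate_general hm lam h1 σ1 σ2 hσ1 hσ2
end
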